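/- Let |CCZ⟩ ∈ ℂ⁸ be the state with coordinates (1/√8)·(−1)^{x·y·z} at basis state |x,y,z⟩, and let |T⟩^{⊗3} ∈ ℂ⁸ be the state with coordinates (1/√8)·e^{iπ(x+y+z)/4}. Let D be the diagonal 8×8 unitary with diagonal entry exp((iπ/4)·((x⊕y) + (x⊕z) + (y⊕z) − (x⊕y⊕z))) at |x,y,z⟩. Then |T⟩^{⊗3} = D·|CCZ⟩. Moreover, for all x,y,z ∈ {0,1} the exponent identity x + y + z + (x⊕y⊕z) = 4·x·y·z + (x⊕y) + (x⊕z) + (y⊕z) holds, and (x⊕y) + (x⊕z) + (y⊕z) is always even, so that D factors as a diagonal unitary with entries in {1, i} (implementable by Clifford phase gadgets) times the single parity phase exp(−(iπ/4)(x⊕y⊕z)) (implementable with one T† gate and CNOTs). Hence the magic state |CCZ⟩ can be converted into three |T⟩ states using Clifford operations and a single T gate. -/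

import Mathlib

/- STATEMENT 16: The magic state |CCZ⟩ is converted into |T⟩^{⊗3} by the
diagonal unitary D with entries exp((iπ/4)((x⊕y)+(x⊕z)+(y⊕z)−(x⊕y⊕z))):
|T⟩^{⊗3} = D·|CCZ⟩. Moreover x+y+z+(x⊕y⊕z) = 4xyz+(x⊕y)+(x⊕z)+(y⊕z) for bits
x,y,z, and (x⊕y)+(x⊕z)+(y⊕z) is always even. -/

open Complex Matrix

noncomputable section

/-- The bit `x` of the basis state `|4x+2y+z⟩`. -/
def bx (k : Fin 8) : ℕ := k.val / 4 % 2

/-- The bit `y` of the basis state `|4x+2y+z⟩`. -/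
def by' (k : Fin 8) : ℕ := k.val / 2 % 2

/-- The bit `z` of the basis state `|4x+2y+z⟩`. -/
def bz (k : Fin 8) : ℕ := k.val % 2

/-- XOR of bits, as addition mod 2 valued in {0,1} ⊆ ℕ. -/
def xor2 (a b : ℕ) : ℕ := (a + b) % 2

/-- The magic state `|CCZ⟩` with coordinate `(1/√8)·(−1)^{x·y·z}` at `|x,y,z⟩`. -/
def cczState : Fin 8 → ℂ :=
  fun k => (1 / Real.sqrt 8) * (-1 : ℂ) ^ (bx k * by' k * bz k)

/-- The state `|T⟩^{⊗3}` with coordinate `(1/√8)·e^{iπ(x+y+z)/4}` at `|x,y,z⟩`. -/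
def t3State : Fin 8 → ℂ :=
  fun k => (1 / Real.sqrt 8)
    * Complex.exp (Real.pi * Complex.I * ((bx k : ℂ) + (by' k : ℂ) + (bz k : ℂ)) / 4)

/-- The diagonal unitary with entry
`exp((iπ/4)·((x⊕y) + (x⊕z) + (y⊕z) − (x⊕y⊕z)))` at `|x,y,z⟩`. -/
def Dmat : Matrix (Fin 8) (Fin 8) ℂ :=
  Matrix.diagonal fun k =>
    Complex.exp ((Real.pi * Complex.I / 4)
      * (((xor2 (bx k) (by' k) + xor2 (bx k) (bz k) + xor2 (by' k) (bz k) : ℕ) : ℂ)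
          - ((xor2 (xor2 (bx k) (by' k)) (bz k) : ℕ) : ℂ)))

lemma bx_le_one (k : Fin 8) : bx k ≤ 1 := Nat.le_of_lt_succ (Nat.mod_lt _ two_pos)

lemma by'_le_one (k : Fin 8) : by' k ≤ 1 := Nat.le_of_lt_succ (Nat.mod_lt _ two_pos)

lemma bz_le_one (k : Fin 8) : bz k ≤ 1 := Nat.le_of_lt_succ (Nat.mod_lt _ two_pos)

lemma two_dvd_xor2_add_xor2_add_xor2 (x y z : ℕ) : 2 ∣ xor2 x y + xor2 x z + xor2 y z := by
  unfold xor2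
  omega

lemma add_add_add_parity_eq {x y z : ℕ} (hx : x ≤ 1) (hy : y ≤ 1) (hz : z ≤ 1) :
    x + y + z + xor2 (xor2 x y) z = 4 * (x * y * z) + (xor2 x y + xor2 x z + xor2 y z) := by
  interval_cases x <;> interval_cases y <;> interval_cases z <;> rfl

/-- The `T`-phase of `|x,y,z⟩` splits off the `CCZ` sign, since `exp (iπ/4 · 4xyz) = (-1)^{xyz}`. -/
lemma exp_T_phase_eq_mul_ccz_sign {x y z : ℕ} (hx : x ≤ 1) (hy : y ≤ 1) (hz : z ≤ 1) :
    exp (Real.pi * I * ((x : ℂ) + y + z) / 4)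
      = exp ((Real.pi * I / 4)
          * (((xor2 x y + xor2 x z + xor2 y z : ℕ) : ℂ) - ((xor2 (xor2 x y) z : ℕ) : ℂ)))
        * (-1) ^ (x * y * z) := by
  have hsum : ((x : ℂ) + y + z)
      = 4 * ((x * y * z : ℕ) : ℂ) + ((xor2 x y + xor2 x z + xor2 y z : ℕ) : ℂ)
          - ((xor2 (xor2 x y) z : ℕ) : ℂ) := by
    rw [eq_sub_iff_add_eq]
    exact_mod_cast add_add_add_parity_eq hx hy hz
  rw [hsum, ← exp_pi_mul_I, ← exp_nat_mul, ← exp_add]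
  congr 1
  ring

theorem ccz_state_to_three_T_states :
    t3State = Dmat.mulVec cczState
    ∧ (∀ x y z : ℕ, x ≤ 1 → y ≤ 1 → z ≤ 1 →
        x + y + z + xor2 (xor2 x y) z
          = 4 * (x * y * z) + (xor2 x y + xor2 x z + xor2 y z))
    ∧ (∀ x y z : ℕ, x ≤ 1 → y ≤ 1 → z ≤ 1 →
        2 ∣ xor2 x y + xor2 x z + xor2 y z) := by
  refine ⟨?_, fun x y z hx hy hz => add_add_add_parity_eq hx hy hz,
    fun x y z _ _ _ => two_dvd_xor2_add_xor2_add_xor2 x y z⟩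
  funext k
  rw [Dmat, mulVec_diagonal, t3State, cczState,
    exp_T_phase_eq_mul_ccz_sign (bx_le_one k) (by'_le_one k) (bz_le_one k)]
  ring

end
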